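/- Tail estimate against a mean-zero bump in the non-homogeneous setting. Let μ be a Borel measure on ℝ^N satisfying μ(B(x,r)) ≤ r^d for all balls, let K be a d-dimensional Calderón–Zygmund kernel with exponent α > 0, and let b₁, b₂ be measurable with ‖b₁‖_{L^∞(μ)} ≤ 1 and ‖b₂‖_{L^∞(μ)} ≤ 1. Let Q be an axis-parallel cube, let φ ∈ L¹(μ) be supported in Q with ∫ b₁ φ dμ = 0, and let A ⊆ ℝ^N be a measurable set with dist(A,Q) ≥ ℓ(Q) > 0. Then the double integral converges absolutely and |∫_A ∫_Q b₂(x) K(x,y) b₁(y) φ(y) dμ(y) dμ(x)| ≤ C (ℓ(Q)/dist(A,Q))^α ‖φ‖_{L¹(μ)}, where C depends only on N, d and α. -/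

import Mathlib

open MeasureTheory ENNReal

noncomputable section

/-- Euclidean space `ℝ^N`. -/
abbrev RN (N : ℕ) := EuclideanSpace ℝ (Fin N)

/-- The axis-parallel (half-open) cube with centre `c` and side-length `l`. -/
def cube {N : ℕ} (c : RN N) (l : ℝ) : Set (RN N) :=
  {x | ∀ i, c i - l / 2 ≤ x i ∧ x i < c i + l / 2}

/-- `μ(B(x,r)) ≤ r^d` for all balls. -/
def HasGrowth {N : ℕ} (μ : Measure (RN N)) (d : ℝ) : Prop :=
  ∀ (x : RN N) (r : ℝ), 0 < r → μ (Metric.ball x r) ≤ ENNReal.ofReal (r ^ d)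

/-- A `d`-dimensional Calderón–Zygmund kernel with exponent `α`. -/
structure IsCZKernel {N : ℕ} (d α : ℝ) (K : RN N → RN N → ℂ) : Prop where
  meas : Measurable (Function.uncurry K)
  bound : ∀ x y : RN N, x ≠ y → ‖K x y‖ ≤ dist x y ^ (-d)
  smooth : ∀ x x' y : RN N, 0 < dist x x' → 2 * dist x x' < dist x y →
    ‖K x y - K x' y‖ + ‖K y x - K y x'‖ ≤ dist x x' ^ α / dist x y ^ (d + α)


/-- The (Euclidean) distance between two sets. -/
def sDist {N : ℕ} (s t : Set (RN N)) : ℝ :=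
  sInf {r | ∃ x ∈ s, ∃ y ∈ t, r = dist x y}

/-!
Write `D = dist(A, Q)` and let `c` be the centre of `Q`. Since `∫ b₁ φ = 0`, the inner integral
equals `∫ (K(x,y) - K(x,c)) b₁(y) φ(y) dμ(y)`, and for `x ∈ A`, `y ∈ Q` the regularity of `K`
(or its size bound, when `x` is within a few side-lengths of `Q`) gives
`|K(x,y) - K(x,c)| ≲ ℓ(Q)^α |x - c|^(-(d+α))`. It remains to integrate `|x - c|^(-(d+α))` over
`|x - c| ≥ D`: on dyadic annuli the growth condition bounds the measure, and the resulting
geometric series is `≲ D^(-α)`.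
-/

open Metric Set Filter

lemma rpow_neg_mul_rpow_two_mul {d α D : ℝ} (hD : 0 < D) (k : ℕ) :
    (2 ^ k * D) ^ (-(d + α)) * (2 ^ (k + 1) * D) ^ d = 2 ^ d * D ^ (-α) * (2 ^ (-α)) ^ k := by
  have ht : 0 < 2 ^ k * D := by positivity
  rw [pow_succ, mul_comm _ (2 : ℝ), mul_assoc, Real.mul_rpow zero_le_two ht.le,
    mul_left_comm, ← Real.rpow_add ht, Real.rpow_pow_comm zero_le_two,
    show -(d + α) + d = -α by ring, Real.mul_rpow (by positivity) hD.le]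
  ring

section Tail

variable {X : Type*} [PseudoMetricSpace X] {c : X} {d α D : ℝ}

lemma ofReal_rpow_neg_dist_le_tsum_indicator_ball (hd : 0 ≤ d) (hα : 0 < α) (hD : 0 < D)
    {x : X} (hx : D ≤ dist x c) :
    ENNReal.ofReal (dist x c ^ (-(d + α))) ≤ ∑' k : ℕ, (ball c (2 ^ (k + 1) * D)).indicator
      (fun _ => ENNReal.ofReal ((2 ^ k * D) ^ (-(d + α)))) x := by
  obtain ⟨k, hk, hk'⟩ := exists_nat_pow_near ((one_le_div hD).2 hx) one_lt_two
  refine le_trans ?_ (ENNReal.le_tsum k)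
  rw [indicator_of_mem (mem_ball.2 ((div_lt_iff₀ hD).1 hk'))]
  exact ENNReal.ofReal_le_ofReal <|
    Real.rpow_le_rpow_of_nonpos (by positivity) ((le_div_iff₀ hD).1 hk) (by linarith)

variable [MeasurableSpace X] {μ : Measure X}

lemma ofReal_rpow_neg_mul_measure_ball_le
    (hgrowth : ∀ r, 0 < r → μ (ball c r) ≤ ENNReal.ofReal (r ^ d)) (hD : 0 < D) (k : ℕ) :
    ENNReal.ofReal ((2 ^ k * D) ^ (-(d + α))) * μ (ball c (2 ^ (k + 1) * D)) ≤
      ENNReal.ofReal (2 ^ d * D ^ (-α)) * ENNReal.ofReal (2 ^ (-α)) ^ k := by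
  calc _ ≤ ENNReal.ofReal ((2 ^ k * D) ^ (-(d + α))) * ENNReal.ofReal ((2 ^ (k + 1) * D) ^ d) := by
        gcongr; exact hgrowth _ (by positivity)
    _ = _ := by
        rw [← ENNReal.ofReal_mul (by positivity), rpow_neg_mul_rpow_two_mul hD,
          ENNReal.ofReal_mul (by positivity), ENNReal.ofReal_pow (by positivity)]

variable [OpensMeasurableSpace X]

/-- Dyadic decomposition: where `2^k D ≤ dist x c < 2^(k+1) D` the integrand is at most
`(2^k D)^(-(d+α))` on a ball of measure `≤ (2^(k+1) D)^d`, and these bounds sum to a geometric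
series in `2^(-α)`. -/
theorem setLIntegral_rpow_neg_dist_le
    (hgrowth : ∀ r, 0 < r → μ (ball c r) ≤ ENNReal.ofReal (r ^ d))
    (hd : 0 ≤ d) (hα : 0 < α) (hD : 0 < D) :
    ∫⁻ x in (ball c D)ᶜ, ENNReal.ofReal (dist x c ^ (-(d + α))) ∂μ ≤
      ENNReal.ofReal (2 ^ d / (1 - 2 ^ (-α)) * D ^ (-α)) := by
  have h2α : (2 : ℝ) ^ (-α) < 1 := Real.rpow_lt_one_of_one_lt_of_neg one_lt_two (by linarith)
  calc _ ≤ ∫⁻ x in (ball c D)ᶜ, ∑' k : ℕ, (ball c (2 ^ (k + 1) * D)).indicator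
          (fun _ => ENNReal.ofReal ((2 ^ k * D) ^ (-(d + α)))) x ∂μ :=
        setLIntegral_mono (.tsum fun _ => measurable_const.indicator measurableSet_ball)
          fun x hx => ofReal_rpow_neg_dist_le_tsum_indicator_ball hd hα hD (not_lt.1 hx)
    _ ≤ ∫⁻ x, ∑' k : ℕ, (ball c (2 ^ (k + 1) * D)).indicator
          (fun _ => ENNReal.ofReal ((2 ^ k * D) ^ (-(d + α)))) x ∂μ :=
        setLIntegral_le_lintegral _ _
    _ = ∑' k : ℕ, ENNReal.ofReal ((2 ^ k * D) ^ (-(d + α))) * μ (ball c (2 ^ (k + 1) * D)) := by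
        rw [lintegral_tsum fun k => (measurable_const.indicator measurableSet_ball).aemeasurable]
        simp only [lintegral_indicator measurableSet_ball, setLIntegral_const]
    _ ≤ ∑' k : ℕ, ENNReal.ofReal (2 ^ d * D ^ (-α)) * ENNReal.ofReal (2 ^ (-α)) ^ k :=
        ENNReal.tsum_le_tsum fun k => ofReal_rpow_neg_mul_measure_ball_le hgrowth hD k
    _ = _ := by
        rw [ENNReal.tsum_mul_left, ENNReal.tsum_geometric, ← ENNReal.ofReal_one,
          ← ENNReal.ofReal_sub _ (by positivity), ← ENNReal.ofReal_inv_of_pos (by linarith),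
          ← ENNReal.ofReal_mul (by positivity)]
        congr 1
        ring

theorem integrableOn_rpow_neg_dist
    (hgrowth : ∀ r, 0 < r → μ (ball c r) ≤ ENNReal.ofReal (r ^ d))
    (hd : 0 ≤ d) (hα : 0 < α) (hD : 0 < D) :
    IntegrableOn (fun x => dist x c ^ (-(d + α))) (ball c D)ᶜ μ := by
  refine ⟨((continuous_id.dist continuous_const).measurable.pow_const _).aestronglyMeasurable, ?_⟩
  rw [hasFiniteIntegral_iff_ofReal (ae_of_all _ fun x => by positivity)]
  exact (setLIntegral_rpow_neg_dist_le hgrowth hd hα hD).trans_lt ofReal_lt_top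

theorem setIntegral_rpow_neg_dist_le
    (hgrowth : ∀ r, 0 < r → μ (ball c r) ≤ ENNReal.ofReal (r ^ d))
    (hd : 0 ≤ d) (hα : 0 < α) (hD : 0 < D) :
    ∫ x in (ball c D)ᶜ, dist x c ^ (-(d + α)) ∂μ ≤ 2 ^ d / (1 - 2 ^ (-α)) * D ^ (-α) := by
  have h2α : (2 : ℝ) ^ (-α) < 1 := Real.rpow_lt_one_of_one_lt_of_neg one_lt_two (by linarith)
  rw [integral_eq_lintegral_of_nonneg_ae (ae_of_all _ fun _ => by positivity)
    (integrableOn_rpow_neg_dist hgrowth hd hα hD).1]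
  exact ENNReal.toReal_le_of_le_ofReal
    (mul_nonneg (div_nonneg (by positivity) (by linarith)) (by positivity))
    (setLIntegral_rpow_neg_dist_le hgrowth hd hα hD)

variable {E : Type*} [NormedAddCommGroup E] {G : X → E} {A : Set X} {M : ℝ}

theorem integrableOn_of_norm_le_rpow_neg_dist
    (hgrowth : ∀ r, 0 < r → μ (ball c r) ≤ ENNReal.ofReal (r ^ d))
    (hd : 0 ≤ d) (hα : 0 < α) (hD : 0 < D) (hA : A ⊆ (ball c D)ᶜ)
    (hG : AEStronglyMeasurable G (μ.restrict A))
    (hGle : ∀ᵐ x ∂μ.restrict A, ‖G x‖ ≤ M * dist x c ^ (-(d + α))) :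
    IntegrableOn G A μ :=
  (((integrableOn_rpow_neg_dist hgrowth hd hα hD).mono_set hA).const_mul M).mono' hG hGle

theorem norm_setIntegral_le_of_norm_le_rpow_neg_dist [NormedSpace ℝ E]
    (hgrowth : ∀ r, 0 < r → μ (ball c r) ≤ ENNReal.ofReal (r ^ d))
    (hd : 0 ≤ d) (hα : 0 < α) (hD : 0 < D) (hA : A ⊆ (ball c D)ᶜ) (hM : 0 ≤ M)
    (hGle : ∀ᵐ x ∂μ.restrict A, ‖G x‖ ≤ M * dist x c ^ (-(d + α))) :
    ‖∫ x in A, G x ∂μ‖ ≤ M * (2 ^ d / (1 - 2 ^ (-α)) * D ^ (-α)) := by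
  have hint := integrableOn_rpow_neg_dist hgrowth hd hα hD
  calc ‖∫ x in A, G x ∂μ‖ ≤ ∫ x in A, M * dist x c ^ (-(d + α)) ∂μ :=
        norm_integral_le_of_norm_le ((hint.mono_set hA).const_mul M) hGle
    _ ≤ ∫ x in (ball c D)ᶜ, M * dist x c ^ (-(d + α)) ∂μ :=
        setIntegral_mono_set (hint.const_mul M) (ae_of_all _ fun _ => by positivity)
          hA.eventuallyLE
    _ = M * ∫ x in (ball c D)ᶜ, dist x c ^ (-(d + α)) ∂μ := integral_const_mul _ _
    _ ≤ _ := by gcongr; exact setIntegral_rpow_neg_dist_le hgrowth hd hα hD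

end Tail

lemma integral_norm_mul_le_of_norm_le_one {X 𝕜 : Type*} [MeasurableSpace X] [NormedRing 𝕜]
    {μ : Measure X} {b φ : X → 𝕜} (hφ : Integrable φ μ) (hb : ∀ᵐ x ∂μ, ‖b x‖ ≤ 1) :
    ∫ x, ‖b x * φ x‖ ∂μ ≤ ∫ x, ‖φ x‖ ∂μ := by
  refine integral_mono_of_nonneg (ae_of_all _ fun _ => norm_nonneg _) hφ.norm ?_
  filter_upwards [hb] with x hx
  exact (norm_mul_le _ _).trans (mul_le_of_le_one_left (norm_nonneg _) hx)

theorem stronglyMeasurable_integral_mul {X Y : Type*} [MeasurableSpace X] [MeasurableSpace Y]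
    {ν : Measure Y} [SFinite ν] {K : X → Y → ℂ} (hK : Measurable (Function.uncurry K))
    {g : Y → ℂ} (hg : AEStronglyMeasurable g ν) :
    StronglyMeasurable fun x => ∫ y, K x y * g y ∂ν := by
  obtain ⟨ψ, hψ, hgψ⟩ := hg
  have hint : StronglyMeasurable fun x => ∫ y, K x y * ψ y ∂ν :=
    StronglyMeasurable.integral_prod_right' (f := fun p => K p.1 p.2 * ψ p.2)
      (hK.stronglyMeasurable.mul (hψ.comp_measurable measurable_snd))
  convert hint using 2 with x
  refine integral_congr_ae ?_
  filter_upwards [hgψ] with y hy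
  rw [hy]

section Cube

variable {N : ℕ}

lemma center_mem_cube (c : RN N) {l : ℝ} (hl : 0 < l) : c ∈ cube c l :=
  fun _ => ⟨by linarith, by linarith⟩

lemma dist_le_of_mem_cube {c y : RN N} {l : ℝ} (hl : 0 ≤ l) (hy : y ∈ cube c l) :
    dist y c ≤ √N / 2 * l := by
  have hcoord : ∀ i, dist (y i) (c i) ^ 2 ≤ (l / 2) ^ 2 := fun i => by
    obtain ⟨h₁, h₂⟩ := hy i
    rw [Real.dist_eq, sq_abs]
    exact sq_le_sq' (by linarith) (by linarith)
  rw [EuclideanSpace.dist_eq, show √N / 2 * l = √(N * (l / 2) ^ 2) by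
    rw [Real.sqrt_mul (Nat.cast_nonneg _), Real.sqrt_sq (by positivity)]; ring]
  gcongr
  calc ∑ i, dist (y i) (c i) ^ 2 ≤ ∑ _i : Fin N, (l / 2) ^ 2 :=
        Finset.sum_le_sum fun i _ => hcoord i
    _ = N * (l / 2) ^ 2 := by simp

lemma sDist_le_dist {s t : Set (RN N)} {x y : RN N} (hx : x ∈ s) (hy : y ∈ t) :
    sDist s t ≤ dist x y :=
  csInf_le ⟨0, by rintro _ ⟨a, -, b, -, rfl⟩; exact dist_nonneg⟩ ⟨x, hx, y, hy, rfl⟩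

end Cube

lemma HasGrowth.isFiniteMeasureOnCompacts {N : ℕ} {μ : Measure (RN N)} {d : ℝ}
    (hμ : HasGrowth μ d) : IsFiniteMeasureOnCompacts μ := by
  refine ⟨fun s hs => ?_⟩
  obtain ⟨R, hR⟩ := hs.isBounded.subset_ball 0
  calc μ s ≤ μ (ball 0 (max R 1)) := measure_mono (hR.trans (ball_subset_ball (le_max_left _ _)))
    _ ≤ ENNReal.ofReal (max R 1 ^ d) := hμ 0 _ (lt_max_of_lt_right one_pos)
    _ < ⊤ := ofReal_lt_top

namespace IsCZKernel

variable {N : ℕ} {d α : ℝ} {K : RN N → RN N → ℂ}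

theorem norm_sub_le_of_two_mul_dist_lt (hK : IsCZKernel d α K) {x y c : RN N}
    (h : 2 * dist y c < dist x c) :
    ‖K x y - K x c‖ ≤ dist y c ^ α / dist x c ^ (d + α) := by
  rcases eq_or_ne y c with rfl | hyc
  · rw [sub_self, norm_zero]
    exact div_nonneg (Real.rpow_nonneg dist_nonneg _) (Real.rpow_nonneg dist_nonneg _)
  have := hK.smooth c y x (dist_pos.2 hyc.symm) (by rwa [dist_comm c y, dist_comm c x])
  rw [dist_comm c y, dist_comm c x] at this
  rw [norm_sub_rev]
  exact (le_add_of_nonneg_left (norm_nonneg _)).trans this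

theorem norm_le_of_le_dist (hK : IsCZKernel d α K) (hd : 0 ≤ d) {x y : RN N} {D : ℝ}
    (hD : 0 < D) (hxy : D ≤ dist x y) : ‖K x y‖ ≤ D ^ (-d) :=
  (hK.bound x y (dist_pos.1 (hD.trans_le hxy))).trans <|
    Real.rpow_le_rpow_of_nonpos hD hxy (neg_nonpos.2 hd)

/-- If `2 dist y c < dist x c` this is the regularity of `K`; otherwise `dist x c ≤ 2 s l` and
the size bound `‖K x y‖, ‖K x c‖ ≤ D^(-d)` suffices because `l ≤ D`. -/
theorem norm_sub_le_of_dist_le_mul (hK : IsCZKernel d α K) (hd : 0 ≤ d) (hα : 0 < α)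
    {x y c : RN N} {s l D : ℝ} (hs : 0 ≤ s) (hl : 0 ≤ l) (hD : 0 < D) (hlD : l ≤ D)
    (hyc : dist y c ≤ s * l) (hxy : D ≤ dist x y) (hxc : D ≤ dist x c) :
    ‖K x y - K x c‖ ≤ (s ^ α + 2 * (2 * s) ^ (d + α)) * l ^ α * dist x c ^ (-(d + α)) := by
  set ρ := dist x c
  have hρ : 0 < ρ := hD.trans_le hxc
  rw [Real.rpow_neg hρ.le, ← div_eq_mul_inv, add_mul, add_div]
  by_cases hfar : 2 * dist y c < ρ
  · refine (hK.norm_sub_le_of_two_mul_dist_lt hfar).trans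
      (le_add_of_le_of_nonneg ?_ (by positivity))
    rw [← Real.mul_rpow hs hl]
    gcongr
  · refine le_add_of_nonneg_of_le (by positivity) ?_
    have hρsl : ρ ≤ 2 * s * l := by linarith
    rw [le_div_iff₀ (by positivity)]
    calc ‖K x y - K x c‖ * ρ ^ (d + α) ≤ (D ^ (-d) + D ^ (-d)) * (ρ ^ d * ρ ^ α) := by
          rw [← Real.rpow_add hρ]
          gcongr
          exact (_root_.norm_sub_le _ _).trans
            (add_le_add (hK.norm_le_of_le_dist hd hD hxy) (hK.norm_le_of_le_dist hd hD hxc))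
      _ ≤ (D ^ (-d) + D ^ (-d)) * ((2 * s * D) ^ d * (2 * s * l) ^ α) := by
          gcongr
          exact hρsl.trans (by gcongr)
      _ = 2 * (2 * s) ^ (d + α) * l ^ α := by
          rw [Real.mul_rpow (by positivity) hD.le, Real.mul_rpow (by positivity) hl,
            Real.rpow_add' (by positivity) (by linarith), Real.rpow_neg hD.le]
          field_simp
          ring

variable {μ : Measure (RN N)} {S : Set (RN N)} {g : RN N → ℂ} {x : RN N} {D : ℝ}

theorem integrable_mul (hK : IsCZKernel d α K) (hd : 0 ≤ d) (hg : Integrable g μ)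
    (hgS : ∀ y ∉ S, g y = 0) (hD : 0 < D) (hxS : ∀ y ∈ S, D ≤ dist x y) :
    Integrable (fun y => K x y * g y) μ := by
  refine (hg.norm.const_mul (D ^ (-d))).mono'
    (hK.meas.of_uncurry_left.aestronglyMeasurable.mul hg.1) (ae_of_all _ fun y => ?_)
  by_cases hy : y ∈ S
  · rw [norm_mul]
    exact mul_le_mul_of_nonneg_right (hK.norm_le_of_le_dist hd hD (hxS y hy)) (norm_nonneg _)
  · simp [hgS y hy]

/-- Against a mean-zero `g`, `K x y` may be replaced by `K x y - K x c`. -/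
theorem norm_integral_mul_le (hK : IsCZKernel d α K) (hd : 0 ≤ d) (hα : 0 < α)
    (hg : Integrable g μ) (hgS : ∀ y ∉ S, g y = 0) (hmean : ∫ y, g y ∂μ = 0) {c : RN N}
    {s l : ℝ} (hs : 0 ≤ s) (hl : 0 ≤ l) (hD : 0 < D) (hlD : l ≤ D)
    (hSc : ∀ y ∈ S, dist y c ≤ s * l) (hxS : ∀ y ∈ S, D ≤ dist x y) (hxc : D ≤ dist x c) :
    ‖∫ y, K x y * g y ∂μ‖ ≤
      (s ^ α + 2 * (2 * s) ^ (d + α)) * l ^ α * dist x c ^ (-(d + α)) * ∫ y, ‖g y‖ ∂μ := by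
  have hsub : ∫ y, K x y * g y ∂μ = ∫ y, (K x y - K x c) * g y ∂μ := by
    simp_rw [sub_mul]
    rw [integral_sub (hK.integrable_mul hd hg hgS hD hxS) (hg.const_mul _), integral_const_mul,
      hmean, mul_zero, sub_zero]
  rw [hsub, ← integral_const_mul]
  refine norm_integral_le_of_norm_le (hg.norm.const_mul _) (ae_of_all _ fun y => ?_)
  by_cases hy : y ∈ S
  · rw [norm_mul]
    exact mul_le_mul_of_nonneg_right
      (hK.norm_sub_le_of_dist_le_mul hd hα hs hl hD hlD (hSc y hy) (hxS y hy) hxc) (norm_nonneg _)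
  · simp [hgS y hy]

theorem norm_integral_mul_bump_le (hK : IsCZKernel d α K) (hd : 0 ≤ d) (hα : 0 < α)
    {b φ : RN N → ℂ} {c : RN N} {l : ℝ} (hb : AEStronglyMeasurable b μ)
    (hb1 : ∀ᵐ y ∂μ, ‖b y‖ ≤ 1) (hφ : Integrable φ μ) (hφQ : ∀ y ∉ cube c l, φ y = 0)
    (hmean : ∫ y, b y * φ y ∂μ = 0) (hl : 0 < l) (hlD : l ≤ D)
    (hxQ : ∀ y ∈ cube c l, D ≤ dist x y) :
    ‖∫ y, K x y * (b y * φ y) ∂μ‖ ≤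
      ((√N / 2) ^ α + 2 * √N ^ (d + α)) * l ^ α * (∫ y, ‖φ y‖ ∂μ) * dist x c ^ (-(d + α)) := by
  have hD : 0 < D := hl.trans_le hlD
  calc _ ≤ ((√N / 2) ^ α + 2 * (2 * (√N / 2)) ^ (d + α)) * l ^ α * dist x c ^ (-(d + α)) *
        ∫ y, ‖b y * φ y‖ ∂μ :=
        hK.norm_integral_mul_le hd hα (hφ.bdd_mul hb hb1) (fun y hy => by rw [hφQ y hy, mul_zero])
          hmean (by positivity) hl.le hD hlD (fun y hy => dist_le_of_mem_cube hl.le hy) hxQ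
          (hxQ c (center_mem_cube c hl))
    _ ≤ ((√N / 2) ^ α + 2 * (2 * (√N / 2)) ^ (d + α)) * l ^ α * dist x c ^ (-(d + α)) *
        ∫ y, ‖φ y‖ ∂μ :=
        mul_le_mul_of_nonneg_left (integral_norm_mul_le_of_norm_le_one hφ hb1) (by positivity)
    _ = _ := by rw [mul_div_cancel₀ _ two_ne_zero]; ring

end IsCZKernel

theorem tail_estimate_mean_zero_bump_general
    (N : ℕ) (d α : ℝ) (hd0 : 0 < d) (hα : 0 < α) :
    ∃ C : ℝ, ∀ (μ : Measure (RN N)) (K : RN N → RN N → ℂ) (b₁ b₂ : RN N → ℂ),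
      HasGrowth μ d → IsCZKernel d α K →
      Measurable b₁ → (∀ᵐ x ∂μ, ‖b₁ x‖ ≤ 1) →
      Measurable b₂ → (∀ᵐ x ∂μ, ‖b₂ x‖ ≤ 1) →
      ∀ (cQ : RN N) (lQ : ℝ) (A : Set (RN N)), MeasurableSet A →
        0 < lQ → lQ ≤ sDist A (cube cQ lQ) →
      ∀ φ : RN N → ℂ,
        Integrable φ μ → (∀ x, x ∉ cube cQ lQ → φ x = 0) →
        (∫ x, b₁ x * φ x ∂μ) = 0 →
        -- absolute convergence of the double integral
        ((∀ x ∈ A, Integrable (fun y => K x y * b₁ y * φ y) μ) ∧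
          IntegrableOn (fun x => b₂ x * ∫ y, K x y * b₁ y * φ y ∂μ) A μ ∧
          -- the tail estimate
          ‖∫ x in A, b₂ x * ∫ y, K x y * b₁ y * φ y ∂μ ∂μ‖ ≤
            C * (lQ / sDist A (cube cQ lQ)) ^ α * ∫ x, ‖φ x‖ ∂μ) := by
  refine ⟨((√N / 2) ^ α + 2 * √N ^ (d + α)) * (2 ^ d / (1 - 2 ^ (-α))), ?_⟩
  intro μ K b₁ b₂ hμ hK hb₁m hb₁ hb₂m hb₂ cQ lQ A hA hlQ hsep φ hφ hφQ hmean
  have := hμ.isFiniteMeasureOnCompacts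
  simp only [mul_assoc (K _ _)]
  set D := sDist A (cube cQ lQ)
  have hD : 0 < D := hlQ.trans_le hsep
  have hAQ : ∀ x ∈ A, ∀ y ∈ cube cQ lQ, D ≤ dist x y := fun x hx y hy => sDist_le_dist hx hy
  have hAc : A ⊆ (ball cQ D)ᶜ := fun x hx => not_lt.2 (hAQ x hx cQ (center_mem_cube cQ hlQ))
  have hg : Integrable (fun y => b₁ y * φ y) μ := hφ.bdd_mul hb₁m.aestronglyMeasurable hb₁
  have hG : ∀ᵐ x ∂μ.restrict A, ‖b₂ x * ∫ y, K x y * (b₁ y * φ y) ∂μ‖ ≤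
      ((√N / 2) ^ α + 2 * √N ^ (d + α)) * lQ ^ α * (∫ y, ‖φ y‖ ∂μ) * dist x cQ ^ (-(d + α)) := by
    filter_upwards [ae_restrict_mem hA, ae_restrict_of_ae hb₂] with x hx hb₂x
    rw [norm_mul]
    exact (mul_le_of_le_one_left (norm_nonneg _) hb₂x).trans <| hK.norm_integral_mul_bump_le
      hd0.le hα hb₁m.aestronglyMeasurable hb₁ hφ hφQ hmean hlQ hsep (hAQ x hx)
  refine ⟨fun x hx => hK.integrable_mul hd0.le hg (fun y hy => by rw [hφQ y hy, mul_zero]) hD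
      (hAQ x hx),
    integrableOn_of_norm_le_rpow_neg_dist (hμ cQ) hd0.le hα hD hAc
      (hb₂m.aestronglyMeasurable.mul
        (stronglyMeasurable_integral_mul hK.meas hg.1).aestronglyMeasurable).restrict hG, ?_⟩
  refine (norm_setIntegral_le_of_norm_le_rpow_neg_dist (hμ cQ) hd0.le hα hD hAc
    (by positivity) hG).trans_eq ?_
  rw [Real.div_rpow hlQ.le hD.le, Real.rpow_neg hD.le]
  ring

/-- **Tail estimate against a mean-zero bump in the non-homogeneous setting.** -/
theorem tail_estimate_mean_zero_bump
    (N : ℕ) (hN : 0 < N) (d α : ℝ) (hd0 : 0 < d) (hdN : d ≤ N) (hα : 0 < α) :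
    ∃ C : ℝ, ∀ (μ : Measure (RN N)) (K : RN N → RN N → ℂ) (b₁ b₂ : RN N → ℂ),
      HasGrowth μ d → IsCZKernel d α K →
      Measurable b₁ → (∀ᵐ x ∂μ, ‖b₁ x‖ ≤ 1) →
      Measurable b₂ → (∀ᵐ x ∂μ, ‖b₂ x‖ ≤ 1) →
      ∀ (cQ : RN N) (lQ : ℝ) (A : Set (RN N)), MeasurableSet A →
        0 < lQ → lQ ≤ sDist A (cube cQ lQ) →
      ∀ φ : RN N → ℂ,
        Integrable φ μ → (∀ x, x ∉ cube cQ lQ → φ x = 0) →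
        (∫ x, b₁ x * φ x ∂μ) = 0 →
        -- absolute convergence of the double integral
        ((∀ x ∈ A, Integrable (fun y => K x y * b₁ y * φ y) μ) ∧
          IntegrableOn (fun x => b₂ x * ∫ y, K x y * b₁ y * φ y ∂μ) A μ ∧
          -- the tail estimate
          ‖∫ x in A, b₂ x * ∫ y, K x y * b₁ y * φ y ∂μ ∂μ‖ ≤
            C * (lQ / sDist A (cube cQ lQ)) ^ α * ∫ x, ‖φ x‖ ∂μ) :=
  tail_estimate_mean_zero_bump_general N d α hd0 hα
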